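/- arXiv:2401.09291 — 5 statements merged into one kernel-verified Lean document; each statement's English description precedes it below -/
import Mathlib

section
/- Let C be a skeletally small, idempotent complete additive category with weak kernels, and let X ⊆ C be a contravariantly finite additive subcategory. Then for every object C₀ of C, the restricted representable functor C(−, C₀)|_X is a finitely presented X-module; consequently the exact restriction functor Mod C → Mod X restricts to an exact functor mod C → mod X on finitely presented modules. -/
/-!
Let `C(−,A) ⟶ C(−,B) ⟶ M ⟶ 0` present `M`, with `k : A ⟶ B` the Yoneda preimage of the first
map, and choose right `X`-approximations `xA : ι XA ⟶ A` and `xB : ι XB ⟶ B`. Every element of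
`M(ι W)` lifts to some `ι t ≫ xB`, and it vanishes iff `ι t ≫ xB = ι a ≫ xA ≫ k` for some
`a : W ⟶ XA`, i.e. iff `t` is the first leg of a square over the cospan `xB`, `xA ≫ k`. Those
squares all factor through a weak pullback `P ∈ X` of that cospan: a right `X`-approximation of a
weak kernel in `C` of `ι (XB ⨯ XA) ⟶ B`. Hence `X(−,P) ⟶ X(−,XB) ⟶ M|_X ⟶ 0` is exact.
-/

open CategoryTheory Limits

universe u

namespace Stmt1

/-- Finitely presented modules over a small preadditive category `D`. -/
def IsFinPres {D : Type u} [SmallCategory D] [Preadditive D] (M : Dᵒᵖ ⥤ AddCommGrpCat.{u}) : Prop :=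
  ∃ (A B : D) (q : preadditiveYoneda.obj A ⟶ preadditiveYoneda.obj B)
    (p : preadditiveYoneda.obj B ⟶ M),
      (∀ W : Dᵒᵖ, Function.Surjective (p.app W)) ∧
      (∀ W : Dᵒᵖ, Function.Exact (q.app W) (p.app W))

/-- The restriction functor on (all) modules, along `ι : X ⥤ C`. -/
def res {X C : Type u} [SmallCategory X] [SmallCategory C] (ι : X ⥤ C) :
    (Cᵒᵖ ⥤ AddCommGrpCat.{u}) ⥤ (Xᵒᵖ ⥤ AddCommGrpCat.{u}) :=
  (Functor.whiskeringLeft Xᵒᵖ Cᵒᵖ AddCommGrpCat.{u}).obj ι.op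

end Stmt1

open Stmt1

theorem hasWeakKernels_of_exists {C : Type*} [Category C] [HasZeroMorphisms C]
    (h : ∀ (A B : C) (b : A ⟶ B), ∃ (W : C) (a : W ⟶ A), a ≫ b = 0 ∧
      ∀ (T : C) (t : T ⟶ A), t ≫ b = 0 → ∃ u : T ⟶ W, u ≫ a = t) :
    HasWeakKernels C where
  hasWeakLimit {A B} b := by
    obtain ⟨W, a, hab, hlift⟩ := h A B b
    choose lift fac using fun s : KernelFork b => hlift s.pt s.ι s.condition
    exact HasWeakLimit.mk ⟨KernelFork.ofι a hab, Fork.IsWeakLimit.mk _ lift fac⟩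

section

variable {X C : Type*} [Category X] [Category C] (ι : X ⥤ C)

def IsContravariantlyFinite : Prop :=
  ∀ D : C, ∃ (X₀ : X) (x : ι.obj X₀ ⟶ D),
    ∀ (X' : X) (f : ι.obj X' ⟶ D), ∃ g : X' ⟶ X₀, ι.map g ≫ x = f

variable [ι.Full] [ι.Faithful]

theorem hasBinaryProducts_of_biproduct_in_image [HasZeroMorphisms C]
    (h : ∀ A B : X, ∃ (bc : BinaryBicone (ι.obj A) (ι.obj B)) (_ : Nonempty bc.IsBilimit)
      (Z : X), Nonempty (ι.obj Z ≅ bc.pt)) :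
    HasBinaryProducts X := by
  have (A B : X) : HasLimit (pair A B) := by
    obtain ⟨bc, ⟨hbc⟩, Z, ⟨e⟩⟩ := h A B
    let fan := BinaryFan.mk (ι.preimage (e.hom ≫ bc.fst)) (ι.preimage (e.hom ≫ bc.snd))
    have : IsLimit (ι.mapCone fan) := (isLimitMapConeBinaryFanEquiv ι _ _).symm <|
      hbc.isLimit.ofIsoLimit (BinaryFan.ext e.symm (by simp) (by simp))
    exact HasLimit.mk ⟨fan, isLimitOfReflects ι this⟩
  exact hasBinaryProducts_of_hasLimit_pair X

theorem exists_weakPullback_of_cospan [Preadditive C] [HasWeakKernels C] [HasBinaryProducts X]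
    (hcf : IsContravariantlyFinite ι) {X₁ X₂ : X} {D : C} (f : ι.obj X₁ ⟶ D)
    (g : ι.obj X₂ ⟶ D) :
    ∃ (P : X) (u : P ⟶ X₁) (v : P ⟶ X₂), ι.map u ≫ f = ι.map v ≫ g ∧
      ∀ (W : X) (a : W ⟶ X₁) (b : W ⟶ X₂), ι.map a ≫ f = ι.map b ≫ g →
        ∃ s : W ⟶ P, s ≫ u = a ∧ s ≫ v = b := by
  let w : ι.obj (X₁ ⨯ X₂) ⟶ D := ι.map prod.fst ≫ f - ι.map prod.snd ≫ g
  obtain ⟨P, x, hx⟩ := hcf (weakKernel w)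
  let j : P ⟶ X₁ ⨯ X₂ := ι.preimage (x ≫ weakKernel.ι w)
  have hj : ι.map j ≫ w = 0 := by
    simp only [j, Functor.map_preimage, Category.assoc, weakKernel.condition, comp_zero]
  refine ⟨P, j ≫ prod.fst, j ≫ prod.snd, ?_, fun W a b hab => ?_⟩
  · simpa [w, sub_eq_zero] using hj
  · have hw : ι.map (prod.lift a b) ≫ w = 0 := by
      rw [Preadditive.comp_sub, ← ι.map_comp_assoc, ← ι.map_comp_assoc, prod.lift_fst,
        prod.lift_snd, hab, sub_self]
    obtain ⟨s, hs⟩ := hx W (weakKernel.lift w _ hw)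
    have hsj : s ≫ j = prod.lift a b := ι.map_injective (by simp [j, reassoc_of% hs])
    exact ⟨s, by rw [← Category.assoc, hsj, prod.lift_fst],
      by rw [← Category.assoc, hsj, prod.lift_snd]⟩

end

section

variable {X C : Type u} [SmallCategory X] [SmallCategory C]

instance (ι : X ⥤ C) : PreservesFiniteLimits (res ι) :=
  inferInstanceAs (PreservesFiniteLimits ((Functor.whiskeringLeft Xᵒᵖ Cᵒᵖ _).obj ι.op))

instance (ι : X ⥤ C) : PreservesFiniteColimits (res ι) :=
  inferInstanceAs (PreservesFiniteColimits ((Functor.whiskeringLeft Xᵒᵖ Cᵒᵖ _).obj ι.op))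

theorem isFinPres_preadditiveYoneda [Preadditive C] (A : C) :
    IsFinPres (preadditiveYoneda.obj A) :=
  ⟨A, A, 0, 𝟙 _, fun _ t => ⟨t, rfl⟩, fun _ t => by simp [eq_comm]⟩

variable [Preadditive X] [Preadditive C]

def yonedaToRes (ι : X ⥤ C) [ι.Additive] {X₀ : X} {D : C} (d : ι.obj X₀ ⟶ D) :
    preadditiveYoneda.obj X₀ ⟶ (res ι).obj (preadditiveYoneda.obj D) where
  app W := AddCommGrpCat.ofHom ((Preadditive.rightComp _ d).comp ι.mapAddHom)
  naturality _ _ _ := by ext t; exact ι.map_comp_assoc _ _ _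

theorem isFinPres_res (ι : X ⥤ C) [ι.Additive] [ι.Full] [ι.Faithful] [HasWeakKernels C]
    [HasBinaryProducts X] (hcf : IsContravariantlyFinite ι)
    {M : Cᵒᵖ ⥤ AddCommGrpCat.{u}} (hM : IsFinPres M) : IsFinPres ((res ι).obj M) := by
  obtain ⟨A, B, q, p, hp, hq⟩ := hM
  obtain ⟨k, rfl⟩ := preadditiveYoneda.map_surjective q
  obtain ⟨XA, xA, hxA⟩ := hcf A
  obtain ⟨XB, xB, hxB⟩ := hcf B
  obtain ⟨P, u, v, huv, hP⟩ := exists_weakPullback_of_cospan ι hcf xB (xA ≫ k)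
  refine ⟨P, XB, preadditiveYoneda.map u, yonedaToRes ι xB ≫ (res ι).map p, ?_, ?_⟩
  · intro W m
    obtain ⟨f, rfl⟩ := hp _ m
    obtain ⟨t, rfl⟩ := hxB W.unop f
    exact ⟨t, rfl⟩
  · intro W t
    refine (hq _ (ι.map t ≫ xB)).trans ⟨?_, ?_⟩
    · rintro ⟨a, ha⟩
      obtain ⟨a', rfl⟩ := hxA W.unop a
      obtain ⟨s, hs, -⟩ := hP W.unop t a' (by rw [← Category.assoc]; exact ha.symm)
      exact ⟨s, hs⟩
    · rintro ⟨(s : W.unop ⟶ P), rfl⟩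
      refine ⟨ι.map (s ≫ v) ≫ xA, ?_⟩
      change (ι.map (s ≫ v) ≫ xA) ≫ k = ι.map (s ≫ u) ≫ xB
      simp [huv]

end

theorem stmt1_general {X C : Type u} [SmallCategory X] [SmallCategory C] [Preadditive X]
    [Preadditive C]
    -- `C` has weak kernels:
    (hwk : ∀ (A B : C) (b : A ⟶ B), ∃ (W : C) (a : W ⟶ A), a ≫ b = 0 ∧
      ∀ (T : C) (t : T ⟶ A), t ≫ b = 0 → ∃ u : T ⟶ W, u ≫ a = t)
    (ι : X ⥤ C) [ι.Additive] [ι.Full] [ι.Faithful]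
    -- `X` is closed under finite direct sums and direct summands in `C`:
    (hsum : ∀ A B : X, ∃ (bc : BinaryBicone (ι.obj A) (ι.obj B)) (_ : Nonempty bc.IsBilimit)
      (Z : X), Nonempty (ι.obj Z ≅ bc.pt))
    -- `X` is contravariantly finite in `C`:
    (hcf : ∀ Cc : C, ∃ (X₀ : X) (x : ι.obj X₀ ⟶ Cc),
      ∀ (X' : X) (f : ι.obj X' ⟶ Cc), ∃ g : X' ⟶ X₀, ι.map g ≫ x = f) :
    -- restricted representables are finitely presented:
    (∀ C₀ : C, IsFinPres ((res ι).obj (preadditiveYoneda.obj C₀))) ∧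
    -- restriction preserves finite presentation:
    (∀ M : Cᵒᵖ ⥤ AddCommGrpCat.{u}, IsFinPres M → IsFinPres ((res ι).obj M)) ∧
    -- the restriction functor is exact:
    Nonempty (PreservesFiniteLimits (res ι)) ∧
    Nonempty (PreservesFiniteColimits (res ι)) := by
  have := hasWeakKernels_of_exists hwk
  have := hasBinaryProducts_of_biproduct_in_image ι hsum
  have hres : ∀ M : Cᵒᵖ ⥤ AddCommGrpCat.{u}, IsFinPres M → IsFinPres ((res ι).obj M) :=
    fun _ => isFinPres_res ι hcf
  exact ⟨fun C₀ => hres _ (isFinPres_preadditiveYoneda C₀), hres, ⟨inferInstance⟩,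
    ⟨inferInstance⟩⟩

theorem stmt1 {X C : Type u} [SmallCategory X] [SmallCategory C] [Preadditive X]
    [Preadditive C] [IsIdempotentComplete C]
    -- `C` has weak kernels:
    (hwk : ∀ (A B : C) (b : A ⟶ B), ∃ (W : C) (a : W ⟶ A), a ≫ b = 0 ∧
      ∀ (T : C) (t : T ⟶ A), t ≫ b = 0 → ∃ u : T ⟶ W, u ≫ a = t)
    (ι : X ⥤ C) [ι.Additive] [ι.Full] [ι.Faithful]
    -- `X` is closed under finite direct sums and direct summands in `C`:
    (hsum : ∀ A B : X, ∃ (bc : BinaryBicone (ι.obj A) (ι.obj B)) (_ : Nonempty bc.IsBilimit)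
      (Z : X), Nonempty (ι.obj Z ≅ bc.pt))
    (hsummand : ∀ (A : X) (Z : C) (i : Z ⟶ ι.obj A) (p : ι.obj A ⟶ Z), i ≫ p = 𝟙 Z →
      ∃ B : X, Nonempty (ι.obj B ≅ Z))
    -- `X` is contravariantly finite in `C`:
    (hcf : ∀ Cc : C, ∃ (X₀ : X) (x : ι.obj X₀ ⟶ Cc),
      ∀ (X' : X) (f : ι.obj X' ⟶ Cc), ∃ g : X' ⟶ X₀, ι.map g ≫ x = f) :
    -- restricted representables are finitely presented:
    (∀ C₀ : C, IsFinPres ((res ι).obj (preadditiveYoneda.obj C₀))) ∧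
    -- restriction preserves finite presentation:
    (∀ M : Cᵒᵖ ⥤ AddCommGrpCat.{u}, IsFinPres M → IsFinPres ((res ι).obj M)) ∧
    -- the restriction functor is exact:
    Nonempty (PreservesFiniteLimits (res ι)) ∧
    Nonempty (PreservesFiniteColimits (res ι)) :=
  stmt1_general hwk ι hsum hcf
end

section
/- Let C be a skeletally small, idempotent complete additive category with weak kernels, and X ⊆ C a contravariantly finite additive subcategory. Then the adjoint pair (L, restriction) between Mod C and Mod X restricts to an adjoint pair of functors between the categories mod C and mod X of finitely presented modules, with L fully faithful. -/
/-!
`L` is the left Kan extension along `ι.op`, fully faithful because `ι` is. Modules need not be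
additive functors, but `X` inherits binary biproducts from `C`, and this makes `C(-, ιA)` the
left Kan extension of `X(-, A)`. As a left adjoint `L` preserves cokernels, so it sends a
presentation by representables to one.

For restriction, replace a presentation `C(-, A) → C(-, B) → M → 0` by right
`X`-approximations `ιA₀ → A` and `ιB₀ → B`, a lift `b : A₀ → B₀` of `ιA₀ → A → B`, and a map
`k : W₀ → B₀` obtained by approximating a weak kernel of `ιB₀ → B`; then `[b k] : A₀ ⊞ W₀ → B₀`
presents `M` restricted to `X`.
-/

open CategoryTheory Limits

universe u

namespace Stmt3

/-- Finitely presented modules over a small preadditive category `D`. -/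
def IsFinPres {D : Type u} [SmallCategory D] [Preadditive D] (M : Dᵒᵖ ⥤ AddCommGrpCat.{u}) : Prop :=
  ∃ (A B : D) (q : preadditiveYoneda.obj A ⟶ preadditiveYoneda.obj B)
    (p : preadditiveYoneda.obj B ⟶ M),
      (∀ W : Dᵒᵖ, Function.Surjective (p.app W)) ∧
      (∀ W : Dᵒᵖ, Function.Exact (q.app W) (p.app W))

/-- The restriction functor on modules, along `ι : X ⥤ C`. -/
def res {X C : Type u} [SmallCategory X] [SmallCategory C] (ι : X ⥤ C) :
    (Cᵒᵖ ⥤ AddCommGrpCat.{u}) ⥤ (Xᵒᵖ ⥤ AddCommGrpCat.{u}) :=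
  (Functor.whiskeringLeft Xᵒᵖ Cᵒᵖ AddCommGrpCat.{u}).obj ι.op

end Stmt3

open Stmt3

namespace Stmt3

open Opposite

section Pointwise

variable {E : Type u} [SmallCategory E] {F G M : E ⥤ AddCommGrpCat.{u}}

lemma nonempty_isColimit_cokernelCofork_iff (f : F ⟶ G) (g : G ⟶ M) (w : f ≫ g = 0) :
    Nonempty (IsColimit (CokernelCofork.ofπ g w)) ↔
      ∀ W, Function.Surjective (g.app W) ∧ Function.Exact (f.app W) (g.app W) := by
  have hS : ∀ W, (ShortComplex.mk (f.app W) (g.app W) (by simp [← NatTrans.comp_app, w])).Exact ∧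
      Epi (g.app W) ↔ Function.Surjective (g.app W) ∧ Function.Exact (f.app W) (g.app W) :=
    fun W => by
      rw [ShortComplex.ab_exact_iff_function_exact, AddCommGrpCat.epi_iff_surjective, and_comm]
  constructor
  · rintro ⟨hc⟩ W
    rw [← hS, ShortComplex.exact_and_epi_g_iff_g_is_cokernel]
    exact ⟨CokernelCofork.mapIsColimit _ hc ((evaluation E AddCommGrpCat.{u}).obj W)⟩
  · intro h
    refine ⟨evaluationJointlyReflectsColimits _ fun W => ?_⟩
    refine (CokernelCofork.isColimitMapCoconeEquiv _ _).symm ?_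
    exact ((ShortComplex.exact_and_epi_g_iff_g_is_cokernel _).1 ((hS W).2 (h W))).some

end Pointwise

section Representable

variable {D : Type u} [SmallCategory D] [Preadditive D]

lemma preadditiveYoneda_obj_hom_app {B : D} {G : Dᵒᵖ ⥤ AddCommGrpCat.{u}}
    (γ : preadditiveYoneda.obj B ⟶ G) {W : Dᵒᵖ} (h : W.unop ⟶ B) :
    γ.app W h = G.map h.op (γ.app (op B) (𝟙 B)) := by
  have hnat := ConcreteCategory.congr_hom (γ.naturality h.op) (𝟙 B)
  have hh : (preadditiveYoneda.obj B).map h.op (𝟙 B) = h := Category.comp_id h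
  erw [comp_apply, comp_apply, hh] at hnat
  exact hnat

lemma preadditiveYoneda_obj_hom_ext {B : D} {G : Dᵒᵖ ⥤ AddCommGrpCat.{u}}
    {γ γ' : preadditiveYoneda.obj B ⟶ G} (h : γ.app (op B) (𝟙 B) = γ'.app (op B) (𝟙 B)) :
    γ = γ' := by
  ext W (g : W.unop ⟶ B)
  exact (preadditiveYoneda_obj_hom_app γ g).trans
    ((congrArg _ h).trans (preadditiveYoneda_obj_hom_app γ' g).symm)

lemma isFinPres_iff_nonempty_iso_cokernel (M : Dᵒᵖ ⥤ AddCommGrpCat.{u}) :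
    IsFinPres M ↔ ∃ (A B : D) (f : A ⟶ B), Nonempty (M ≅ cokernel (preadditiveYoneda.map f)) := by
  constructor
  · rintro ⟨A, B, q, p, hs, he⟩
    have w : q ≫ p = 0 := by
      ext W y
      simpa using (he W).apply_apply_eq_zero y
    obtain ⟨hc⟩ := (nonempty_isColimit_cokernelCofork_iff q p w).2 fun W => ⟨hs W, he W⟩
    refine ⟨A, B, preadditiveYoneda.preimage q, ⟨?_⟩⟩
    rw [preadditiveYoneda.map_preimage]
    exact hc.coconePointUniqueUpToIso (colimit.isColimit _)
  · rintro ⟨A, B, f, ⟨e⟩⟩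
    have h := (nonempty_isColimit_cokernelCofork_iff _ _ _).1
      ⟨cokernel.cokernelIso (preadditiveYoneda.map f) _ e.symm rfl⟩
    exact ⟨A, B, _, _, fun W => (h W).1, fun W => (h W).2⟩

end Representable

section LeftKanExtension

variable {X C : Type u} [SmallCategory X] [SmallCategory C] [Preadditive X] [Preadditive C]
  (ι : X ⥤ C) [ι.Additive]

lemma hasBinaryBiproducts_of_full_of_faithful [ι.Full] [ι.Faithful]
    (hsum : ∀ A B : X, ∃ (bc : BinaryBicone (ι.obj A) (ι.obj B)) (_ : Nonempty bc.IsBilimit)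
      (Z : X), Nonempty (ι.obj Z ≅ bc.pt)) :
    HasBinaryBiproducts X where
  has_binary_biproduct A B := by
    obtain ⟨bc, ⟨hbc⟩, Z, ⟨e⟩⟩ := hsum A B
    refine hasBinaryBiproduct_of_total
      { pt := Z
        fst := ι.preimage (e.hom ≫ bc.fst)
        snd := ι.preimage (e.hom ≫ bc.snd)
        inl := ι.preimage (bc.inl ≫ e.inv)
        inr := ι.preimage (bc.inr ≫ e.inv)
        inl_fst := ι.map_injective (by simp)
        inl_snd := ι.map_injective (by simp)
        inr_fst := ι.map_injective (by simp)
        inr_snd := ι.map_injective (by simp) } (ι.map_injective ?_)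
    simpa using e.hom ≫= IsBilimit.binary_total hbc =≫ e.inv

def preadditiveYonedaToRes (A : X) :
    preadditiveYoneda.obj A ⟶ ι.op ⋙ preadditiveYoneda.obj (ι.obj A) where
  app _ := AddCommGrpCat.ofHom ι.mapAddHom
  naturality _ _ h := by
    ext g
    exact ι.map_comp h.unop g

@[simp]
lemma preadditiveYonedaToRes_app_apply (A : X) (W : Xᵒᵖ) (g : W.unop ⟶ A) :
    (preadditiveYonedaToRes ι A).app W g = ι.map g := rfl

variable [HasBinaryBiproducts X]

/-- `M` need not be additive: additivity in `h` is inherited from that of `β` at `A ⊞ A`. -/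
lemma map_add_op_apply {A : X} {M : Cᵒᵖ ⥤ AddCommGrpCat.{u}}
    (β : preadditiveYoneda.obj A ⟶ ι.op ⋙ M) {W : Cᵒᵖ} (h h' : W.unop ⟶ ι.obj A) :
    M.map (h + h').op (β.app (op A) (𝟙 A)) =
      M.map h.op (β.app (op A) (𝟙 A)) + M.map h'.op (β.app (op A) (𝟙 A)) := by
  set g : W.unop ⟶ ι.obj (A ⊞ A) := h ≫ ι.map biprod.inl + h' ≫ ι.map biprod.inr
  have hg : ∀ u : A ⊞ A ⟶ A, M.map (g ≫ ι.map u).op (β.app (op A) (𝟙 A)) =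
      M.map g.op (β.app (op (A ⊞ A)) u) := by
    intro u
    erw [preadditiveYoneda_obj_hom_app β (W := op (A ⊞ A)) u, op_comp, M.map_comp]
    rfl
  have h₁ : h = g ≫ ι.map biprod.fst := by simp [g, ← ι.map_comp]
  have h₂ : h' = g ≫ ι.map biprod.snd := by simp [g, ← ι.map_comp]
  have h₁₂ : h + h' = g ≫ ι.map (biprod.fst + biprod.snd) := by
    rw [ι.map_add, Preadditive.comp_add, ← h₁, ← h₂]
  rw [h₁₂, hg]
  erw [(β.app (op (A ⊞ A))).hom.map_add biprod.fst biprod.snd, map_add, ← hg, ← hg, ← h₁, ← h₂]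

def preadditiveYonedaDesc {A : X} {M : Cᵒᵖ ⥤ AddCommGrpCat.{u}}
    (β : preadditiveYoneda.obj A ⟶ ι.op ⋙ M) : preadditiveYoneda.obj (ι.obj A) ⟶ M where
  app W := AddCommGrpCat.ofHom
    (AddMonoidHom.mk' (fun h => M.map h.op (β.app (op A) (𝟙 A))) (map_add_op_apply ι β))
  naturality W W' f := by
    ext (h : W.unop ⟶ ι.obj A)
    exact M.map_comp_apply h.op f _

@[simp]
lemma preadditiveYonedaDesc_app_apply {A : X} {M : Cᵒᵖ ⥤ AddCommGrpCat.{u}}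
    (β : preadditiveYoneda.obj A ⟶ ι.op ⋙ M) {W : Cᵒᵖ} (h : W.unop ⟶ ι.obj A) :
    (preadditiveYonedaDesc ι β).app W h = M.map h.op (β.app (op A) (𝟙 A)) := rfl

instance isLeftKanExtension_preadditiveYoneda (A : X) :
    (preadditiveYoneda.obj (ι.obj A)).IsLeftKanExtension (preadditiveYonedaToRes ι A) := by
  refine ⟨⟨IsInitial.ofUniqueHom
    (fun G => StructuredArrow.homMk (preadditiveYonedaDesc ι G.hom) ?_) fun G φ => ?_⟩⟩
  · ext W (g : W.unop ⟶ A)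
    exact (preadditiveYoneda_obj_hom_app G.hom g).symm
  · ext1
    apply preadditiveYoneda_obj_hom_ext
    have hw := ConcreteCategory.congr_hom (NatTrans.congr_app (StructuredArrow.w φ) (op A)) (𝟙 A)
    erw [NatTrans.comp_app, comp_apply, preadditiveYonedaToRes_app_apply, ι.map_id] at hw
    erw [hw, preadditiveYonedaDesc_app_apply]
    simp

noncomputable def lanPreadditiveYonedaIso :
    preadditiveYoneda ⋙ ι.op.lan (H := AddCommGrpCat.{u}) ≅ ι ⋙ preadditiveYoneda :=
  NatIso.ofComponents
    (fun A => Functor.leftKanExtensionUnique _ (ι.op.lanUnit.app (preadditiveYoneda.obj A))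
      (preadditiveYoneda.obj (ι.obj A)) (preadditiveYonedaToRes ι A))
    fun {A B} f => by
      apply Functor.hom_ext_of_isLeftKanExtension _ (ι.op.lanUnit.app (preadditiveYoneda.obj A))
      simp only [Functor.comp_map, Functor.leftKanExtensionUnique,
        Functor.leftKanExtensionUniqueOfIso_hom, Iso.refl_hom, Category.id_comp,
        Functor.whiskerLeft_comp]
      erw [← Category.assoc, ← ι.op.lanUnit.naturality (preadditiveYoneda.map f), Category.assoc,
        Functor.descOfIsLeftKanExtension_fac, Functor.descOfIsLeftKanExtension_fac_assoc]
      ext W (g : W.unop ⟶ A)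
      exact ι.map_comp g f

lemma isFinPres_lan_obj {N : Xᵒᵖ ⥤ AddCommGrpCat.{u}} (hN : IsFinPres N) :
    IsFinPres ((ι.op.lan (H := AddCommGrpCat.{u})).obj N) := by
  rw [isFinPres_iff_nonempty_iso_cokernel] at hN ⊢
  obtain ⟨A, B, f, ⟨e⟩⟩ := hN
  have := (ι.op.lanAdjunction AddCommGrpCat.{u}).leftAdjoint_preservesColimits
  exact ⟨ι.obj A, ι.obj B, ι.map f, ⟨(ι.op.lan).mapIso e ≪≫ PreservesCokernel.iso _ _ ≪≫
    cokernel.mapIso _ _ ((lanPreadditiveYonedaIso ι).app A) ((lanPreadditiveYonedaIso ι).app B)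
      ((lanPreadditiveYonedaIso ι).hom.naturality f)⟩⟩

end LeftKanExtension

section Approximation

variable {X C : Type u} [SmallCategory X] [SmallCategory C] [Preadditive C] (ι : X ⥤ C)

def IsRightApproximation {X₀ : X} {B : C} (x : ι.obj X₀ ⟶ B) : Prop :=
  ∀ (X' : X) (f : ι.obj X' ⟶ B), ∃ g : X' ⟶ X₀, ι.map g ≫ x = f

lemma exists_weakKernel_of_isRightApproximation [ι.Full] [ι.Faithful]
    (hwk : ∀ (A B : C) (b : A ⟶ B), ∃ (W : C) (a : W ⟶ A), a ≫ b = 0 ∧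
      ∀ (T : C) (t : T ⟶ A), t ≫ b = 0 → ∃ u : T ⟶ W, u ≫ a = t)
    (hcf : ∀ B : C, ∃ (X₀ : X) (x : ι.obj X₀ ⟶ B), IsRightApproximation ι x)
    {B₀ : X} {B : C} (x : ι.obj B₀ ⟶ B) :
    ∃ (W₀ : X) (k : W₀ ⟶ B₀), ι.map k ≫ x = 0 ∧
      ∀ (X' : X) (g : X' ⟶ B₀), ι.map g ≫ x = 0 → ∃ s : X' ⟶ W₀, s ≫ k = g := by
  obtain ⟨W, w, hw, hwlift⟩ := hwk _ _ x
  obtain ⟨W₀, y, hy⟩ := hcf W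
  refine ⟨W₀, ι.preimage (y ≫ w), by simp [hw], fun X' g hg => ?_⟩
  obtain ⟨t, ht⟩ := hwlift _ _ hg
  obtain ⟨s, hs⟩ := hy X' t
  exact ⟨s, ι.map_injective (by simp [reassoc_of% hs, ht])⟩

variable [Preadditive X] [ι.Additive] [HasBinaryBiproducts X]

lemma isFinPres_res_obj_of_presentation {M : Cᵒᵖ ⥤ AddCommGrpCat.{u}} {A B : C} {f : A ⟶ B}
    {p : preadditiveYoneda.obj B ⟶ M} (hs : ∀ W, Function.Surjective (p.app W))
    (he : ∀ W, Function.Exact ((preadditiveYoneda.map f).app W) (p.app W))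
    {A₀ B₀ W₀ : X} {xA : ι.obj A₀ ⟶ A} {xB : ι.obj B₀ ⟶ B} (hxA : IsRightApproximation ι xA)
    (hxB : IsRightApproximation ι xB) {b : A₀ ⟶ B₀} (hb : ι.map b ≫ xB = xA ≫ f)
    {k : W₀ ⟶ B₀} (hk : ι.map k ≫ xB = 0)
    (hklift : ∀ (X' : X) (g : X' ⟶ B₀), ι.map g ≫ xB = 0 → ∃ s : X' ⟶ W₀, s ≫ k = g) :
    IsFinPres ((res ι).obj M) := by
  refine ⟨A₀ ⊞ W₀, B₀, preadditiveYoneda.map (biprod.desc b k),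
    preadditiveYonedaToRes ι B₀ ≫ Functor.whiskerLeft ι.op (preadditiveYoneda.map xB ≫ p),
    fun W m => ?_, fun W (g : W.unop ⟶ B₀) => ?_⟩
  · obtain ⟨h, rfl⟩ := hs _ m
    obtain ⟨g, rfl⟩ := hxB _ h
    exact ⟨g, rfl⟩
  · change p.app _ (ι.map g ≫ xB) = 0 ↔ ∃ s : W.unop ⟶ A₀ ⊞ W₀, s ≫ biprod.desc b k = g
    constructor
    · intro hg
      obtain ⟨α, hα⟩ := (he _ _).1 hg
      obtain ⟨s₁, rfl⟩ := hxA _ α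
      change (ι.map s₁ ≫ xA) ≫ f = ι.map g ≫ xB at hα
      obtain ⟨s₂, hs₂⟩ := hklift _ (g - s₁ ≫ b) (by simp [Preadditive.sub_comp, hb, ← hα])
      exact ⟨biprod.lift s₁ s₂, by simp [hs₂]⟩
    · rintro ⟨s, rfl⟩
      have hsf : ι.map (s ≫ biprod.desc b k) ≫ xB = (ι.map (s ≫ biprod.fst) ≫ xA) ≫ f := by
        simp [biprod.desc_eq, hb, hk]
      rw [hsf]
      exact (he _).apply_apply_eq_zero _

lemma isFinPres_res_obj
    (hwk : ∀ (A B : C) (b : A ⟶ B), ∃ (W : C) (a : W ⟶ A), a ≫ b = 0 ∧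
      ∀ (T : C) (t : T ⟶ A), t ≫ b = 0 → ∃ u : T ⟶ W, u ≫ a = t)
    (hcf : ∀ B : C, ∃ (X₀ : X) (x : ι.obj X₀ ⟶ B), IsRightApproximation ι x)
    [ι.Full] [ι.Faithful] {M : Cᵒᵖ ⥤ AddCommGrpCat.{u}} (hM : IsFinPres M) :
    IsFinPres ((res ι).obj M) := by
  obtain ⟨A, B, q, p, hs, he⟩ := hM
  obtain ⟨f, rfl⟩ := preadditiveYoneda.map_surjective q
  obtain ⟨A₀, xA, hxA⟩ := hcf A
  obtain ⟨B₀, xB, hxB⟩ := hcf B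
  obtain ⟨b, hb⟩ := hxB A₀ (xA ≫ f)
  obtain ⟨W₀, k, hk, hklift⟩ := exists_weakKernel_of_isRightApproximation ι hwk hcf xB
  exact isFinPres_res_obj_of_presentation ι hs he hxA hxB hb hk hklift

end Approximation

end Stmt3

theorem stmt3_general {X C : Type u} [SmallCategory X] [SmallCategory C] [Preadditive X]
    [Preadditive C]
    (hwk : ∀ (A B : C) (b : A ⟶ B), ∃ (W : C) (a : W ⟶ A), a ≫ b = 0 ∧
      ∀ (T : C) (t : T ⟶ A), t ≫ b = 0 → ∃ u : T ⟶ W, u ≫ a = t)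
    (ι : X ⥤ C) [ι.Additive] [ι.Full] [ι.Faithful]
    (hsum : ∀ A B : X, ∃ (bc : BinaryBicone (ι.obj A) (ι.obj B)) (_ : Nonempty bc.IsBilimit)
      (Z : X), Nonempty (ι.obj Z ≅ bc.pt))
    (hcf : ∀ Cc : C, ∃ (X₀ : X) (x : ι.obj X₀ ⟶ Cc),
      ∀ (X' : X) (f : ι.obj X' ⟶ Cc), ∃ g : X' ⟶ X₀, ι.map g ≫ x = f) :
    ∃ (L : (Xᵒᵖ ⥤ AddCommGrpCat.{u}) ⥤ (Cᵒᵖ ⥤ AddCommGrpCat.{u})),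
      Nonempty (L ⊣ res ι) ∧ L.Full ∧ L.Faithful ∧
      -- `L` sends finitely presented `X`-modules to finitely presented `C`-modules:
      (∀ N : Xᵒᵖ ⥤ AddCommGrpCat.{u}, IsFinPres N → IsFinPres (L.obj N)) ∧
      -- restriction sends finitely presented `C`-modules to finitely presented `X`-modules:
      (∀ M : Cᵒᵖ ⥤ AddCommGrpCat.{u}, IsFinPres M → IsFinPres ((res ι).obj M)) := by
  have := hasBinaryBiproducts_of_full_of_faithful ι hsum
  let adj := ι.op.lanAdjunction AddCommGrpCat.{u}
  exact ⟨ι.op.lan, ⟨adj⟩, adj.fullyFaithfulLOfIsIsoUnit.full,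
    adj.fullyFaithfulLOfIsIsoUnit.faithful, fun _ => isFinPres_lan_obj ι,
    fun _ => isFinPres_res_obj ι hwk hcf⟩

theorem stmt3 {X C : Type u} [SmallCategory X] [SmallCategory C] [Preadditive X]
    [Preadditive C] [IsIdempotentComplete C]
    (hwk : ∀ (A B : C) (b : A ⟶ B), ∃ (W : C) (a : W ⟶ A), a ≫ b = 0 ∧
      ∀ (T : C) (t : T ⟶ A), t ≫ b = 0 → ∃ u : T ⟶ W, u ≫ a = t)
    (ι : X ⥤ C) [ι.Additive] [ι.Full] [ι.Faithful]
    (hsum : ∀ A B : X, ∃ (bc : BinaryBicone (ι.obj A) (ι.obj B)) (_ : Nonempty bc.IsBilimit)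
      (Z : X), Nonempty (ι.obj Z ≅ bc.pt))
    (hsummand : ∀ (A : X) (Z : C) (i : Z ⟶ ι.obj A) (p : ι.obj A ⟶ Z), i ≫ p = 𝟙 Z →
      ∃ B : X, Nonempty (ι.obj B ≅ Z))
    (hcf : ∀ Cc : C, ∃ (X₀ : X) (x : ι.obj X₀ ⟶ Cc),
      ∀ (X' : X) (f : ι.obj X' ⟶ Cc), ∃ g : X' ⟶ X₀, ι.map g ≫ x = f) :
    ∃ (L : (Xᵒᵖ ⥤ AddCommGrpCat.{u}) ⥤ (Cᵒᵖ ⥤ AddCommGrpCat.{u})),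
      Nonempty (L ⊣ res ι) ∧ L.Full ∧ L.Faithful ∧
      -- `L` sends finitely presented `X`-modules to finitely presented `C`-modules:
      (∀ N : Xᵒᵖ ⥤ AddCommGrpCat.{u}, IsFinPres N → IsFinPres (L.obj N)) ∧
      -- restriction sends finitely presented `C`-modules to finitely presented `X`-modules:
      (∀ M : Cᵒᵖ ⥤ AddCommGrpCat.{u}, IsFinPres M → IsFinPres ((res ι).obj M)) :=
  stmt3_general hwk ι hsum hcf
end

section
/- Let C be a skeletally small triangulated category with split idempotents. If A → B → C₀ →^c ΣA and A' → B' → C₀' →^{c'} ΣA' are triangles in C such that the images Im(Yc) and Im(Yc') in mod C are isomorphic, then in the split Grothendieck group K₀^sp(C) one has [A] − [B] + [C₀] = [A'] − [B'] + [C₀']. -/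
/-!
STATEMENT 6: Let `C` be a skeletally small triangulated category with split idempotents.
If `A → B → C₀ →^c ΣA` and `A' → B' → C₀' →^{c'} ΣA'` are triangles in `C` such that the
images `Im(Yc)` and `Im(Yc')` in `mod C` are isomorphic, then in the split Grothendieck
group `K₀^sp(C)` one has `[A] − [B] + [C₀] = [A'] − [B'] + [C₀']`.
-/

open CategoryTheory Limits Pretriangulated

universe u

namespace Stmt6

variable (C : Type u) [SmallCategory C] [Preadditive C]

/-- The relations defining the split Grothendieck group: `[A] = [B]` for `A ≅ B`, and
`[S] = [A] + [B]` whenever `S` is a biproduct of `A` and `B`. -/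
def splitRel : Set (FreeAbelianGroup C) :=
  {x | ∃ A B : C, Nonempty (A ≅ B) ∧ x = FreeAbelianGroup.of A - FreeAbelianGroup.of B} ∪
  {x | ∃ (A B : C) (bc : BinaryBicone A B), Nonempty bc.IsBilimit ∧
        x = FreeAbelianGroup.of bc.pt - FreeAbelianGroup.of A - FreeAbelianGroup.of B}

/-- The split Grothendieck group `K₀^sp(C)`. -/
def K0sp := FreeAbelianGroup C ⧸ AddSubgroup.closure (splitRel C)

instance : AddCommGroup (K0sp C) :=
  QuotientAddGroup.Quotient.addCommGroup (AddSubgroup.closure (splitRel C))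

/-- The class `[A]^sp` of an object in the split Grothendieck group. -/
def clsSp (A : C) : K0sp C := QuotientAddGroup.mk (FreeAbelianGroup.of A)

end Stmt6


/-!
An isomorphism `Im(Yc) ≅ Im(Yc')` is induced, via Yoneda, by maps `f : C₀ ⟶ C₀'` and
`g : C₀' ⟶ C₀` with `f ≫ g ≫ c = c`, `g ≫ f ≫ c' = c'`, and such that `b ≫ f ≫ c' = 0`,
`b' ≫ g ≫ c = 0`. The latter let `f ≫ c'` and `g ≫ c` factor as `c ≫ w` and `c' ≫ w'`.
Add the split triangles `A' → A' ⊞ C₀' → C₀' →0` and `A → A ⊞ C₀ → C₀ →0` to the two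
triangles: with the relations above, elementary row and column operations turn the third
morphism `c ⊞ 0` of the first sum into the third morphism `c' ⊞ 0` of the second. Distinguished
triangles on isomorphic morphisms are isomorphic, so the middle objects `B ⊞ A' ⊞ C₀'` and
`B' ⊞ A ⊞ C₀` are isomorphic, which is the claimed identity in `K₀^sp(C)`.
-/

open Opposite

universe v u'

namespace Stmt6

variable {C : Type u} [SmallCategory C] [Preadditive C]

lemma clsSp_eq_of_iso {X Y : C} (e : X ≅ Y) : clsSp C X = clsSp C Y :=
  QuotientAddGroup.eq.mpr <| by
    rw [neg_add_eq_sub]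
    exact AddSubgroup.subset_closure (Or.inl ⟨Y, X, ⟨e.symm⟩, rfl⟩)

lemma clsSp_biprod (X Y : C) [HasBinaryBiproduct X Y] :
    clsSp C (X ⊞ Y) = clsSp C X + clsSp C Y :=
  QuotientAddGroup.eq_iff_sub_mem.mpr <| by
    rw [← sub_sub]
    exact AddSubgroup.subset_closure (Or.inr ⟨X, Y, _, ⟨BinaryBiproduct.isBilimit X Y⟩, rfl⟩)

lemma clsSp_sub_add_eq_of_iso [HasBinaryBiproducts C] {A B C₀ A' B' C₀' : C}
    (e : B ⊞ (A' ⊞ C₀') ≅ B' ⊞ (A ⊞ C₀)) :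
    clsSp C A - clsSp C B + clsSp C C₀ = clsSp C A' - clsSp C B' + clsSp C C₀' := by
  have h := clsSp_eq_of_iso e
  simp only [clsSp_biprod] at h
  rw [← sub_eq_zero, ← neg_eq_zero, ← sub_eq_zero.mpr h]
  abel

end Stmt6

section Image

variable {D : Type*} [Category D] {P P' Q Q' : D} {η : P ⟶ Q} {η' : P' ⟶ Q'}
  [HasImage η] [HasImage η'] (α : image η ≅ image η')

lemma comp_comp_eq_of_factorThruImage {F : P ⟶ P'} {G : P' ⟶ P}
    (hF : F ≫ factorThruImage η' = factorThruImage η ≫ α.hom)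
    (hG : G ≫ factorThruImage η = factorThruImage η' ≫ α.inv) : F ≫ G ≫ η = η := by
  rw [← image.fac η, reassoc_of% hG, reassoc_of% hF, α.hom_inv_id_assoc]

lemma comp_eq_zero_of_factorThruImage [HasZeroMorphisms D] {F : P ⟶ P'}
    (hF : F ≫ factorThruImage η' = factorThruImage η ≫ α.hom) {U : D} {u : U ⟶ P}
    (hu : u ≫ η = 0) : u ≫ F ≫ η' = 0 := by
  have hu' : u ≫ factorThruImage η = 0 := by
    rw [← cancel_mono (image.ι η), Category.assoc, image.fac, hu, zero_comp]
  rw [← image.fac η', reassoc_of% hF, reassoc_of% hu', zero_comp]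

end Image

section Yoneda

variable {C : Type u'} [Category.{v} C] [Preadditive C]

lemma exists_preadditiveYoneda_map_comp_eq {X Y : C} {F : Cᵒᵖ ⥤ AddCommGrpCat.{v}}
    (p : preadditiveYoneda.obj X ⟶ F) (q : preadditiveYoneda.obj Y ⟶ F) [Epi q] :
    ∃ f : X ⟶ Y, preadditiveYoneda.map f ≫ q = p := by
  have hq : Function.Surjective (q.app (op X)) := by
    rw [← AddCommGrpCat.epi_iff_surjective]; infer_instance
  obtain ⟨f, hf⟩ := hq (p.app (op X) (𝟙 X))
  refine ⟨f, ?_⟩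
  ext ⟨Z⟩ (u : Z ⟶ X)
  calc q.app (op Z) (u ≫ f) = F.map u.op (q.app (op X) f) := (elementwise_of% q.naturality u.op) f
    _ = F.map u.op (p.app (op X) (𝟙 X)) := by rw [hf]
    _ = p.app (op Z) (u ≫ 𝟙 X) := ((elementwise_of% p.naturality u.op) (𝟙 X)).symm
    _ = p.app (op Z) u := by rw [Category.comp_id]

lemma exists_comparison_maps_of_image_preadditiveYoneda_iso {X X' Y Y' : C}
    (c : X ⟶ Y) (c' : X' ⟶ Y')
    [HasImage (preadditiveYoneda.map c)] [HasImage (preadditiveYoneda.map c')]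
    [Epi (factorThruImage (preadditiveYoneda.map c))]
    [Epi (factorThruImage (preadditiveYoneda.map c'))]
    (α : image (preadditiveYoneda.map c) ≅ image (preadditiveYoneda.map c')) :
    ∃ (f : X ⟶ X') (g : X' ⟶ X), f ≫ g ≫ c = c ∧ g ≫ f ≫ c' = c' ∧
      (∀ {W : C} (u : W ⟶ X), u ≫ c = 0 → u ≫ f ≫ c' = 0) ∧
      (∀ {W : C} (u : W ⟶ X'), u ≫ c' = 0 → u ≫ g ≫ c = 0) := by
  obtain ⟨f, hf⟩ := exists_preadditiveYoneda_map_comp_eq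
    (factorThruImage (preadditiveYoneda.map c) ≫ α.hom) (factorThruImage _)
  obtain ⟨g, hg⟩ := exists_preadditiveYoneda_map_comp_eq
    (factorThruImage (preadditiveYoneda.map c') ≫ α.inv) (factorThruImage _)
  have map_comp_eq_zero {W W' W'' : C} (u : W ⟶ W') (v : W' ⟶ W'') (h : u ≫ v = 0) :
      preadditiveYoneda.map u ≫ preadditiveYoneda.map v = 0 := by
    rw [← Functor.map_comp, h, Functor.map_zero]
  refine ⟨f, g, ?_, ?_, fun u hu => ?_, fun u hu => ?_⟩ <;> apply preadditiveYoneda.map_injective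
  · simpa using comp_comp_eq_of_factorThruImage α hf hg
  · simpa using comp_comp_eq_of_factorThruImage α.symm hg hf
  · simpa using comp_eq_zero_of_factorThruImage α hf (map_comp_eq_zero u c hu)
  · simpa using comp_eq_zero_of_factorThruImage α.symm hg (map_comp_eq_zero u c' hu)

end Yoneda

section Biproducts

variable {D : Type*} [Category D] [Preadditive D] [HasBinaryBiproducts D]

noncomputable def biprodTwistIso {X Y : D} (f : X ⟶ Y) (g : Y ⟶ X) : X ⊞ Y ≅ Y ⊞ X where
  hom := biprod.desc (biprod.lift f (𝟙 X - f ≫ g)) (biprod.lift (𝟙 Y) (-g))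
  inv := biprod.desc (biprod.lift g (𝟙 Y - g ≫ f)) (biprod.lift (𝟙 X) (-f))
  hom_inv_id := by
    apply biprod.hom_ext' <;> apply biprod.hom_ext <;>
      simp [Preadditive.comp_sub, Preadditive.sub_comp]
  inv_hom_id := by
    apply biprod.hom_ext' <;> apply biprod.hom_ext <;>
      simp [Preadditive.comp_sub, Preadditive.sub_comp]

noncomputable def biprodShearIso {X Y : D} (f : Y ⟶ X) : X ⊞ Y ≅ X ⊞ Y where
  hom := biprod.desc biprod.inl (biprod.lift f (𝟙 Y))
  inv := biprod.desc biprod.inl (biprod.lift (-f) (𝟙 Y))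

noncomputable def arrowIsoBiprodMapZero {X X' Y Y' : D} {c : X ⟶ Y} {c' : X' ⟶ Y'}
    {f : X ⟶ X'} {g : X' ⟶ X} {w : Y ⟶ Y'} {w' : Y' ⟶ Y} (hw : c ≫ w = f ≫ c')
    (hww' : c ≫ w ≫ w' = c) (hgf : g ≫ f ≫ c' = c') :
    Arrow.mk (biprod.map c (0 : X' ⟶ Y')) ≅ Arrow.mk (biprod.map c' (0 : X ⟶ Y)) :=
  Arrow.isoMk (biprodTwistIso f g ≪≫ biprodShearIso f) (biprodTwistIso w w') (by
    apply biprod.hom_ext' <;> apply biprod.hom_ext <;>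
      simp [biprodTwistIso, biprodShearIso, Preadditive.comp_sub, Preadditive.sub_comp,
        hw, hww', hgf])

end Biproducts

section Triangles

variable {C : Type u'} [Category.{v} C] [Preadditive C] [HasShift C ℤ]
  [∀ n : ℤ, (shiftFunctor C n).Additive] [HasBinaryBiproducts C]

noncomputable abbrev biprodTriangle (T₁ T₂ : Triangle C) : Triangle C where
  obj₁ := T₁.obj₁ ⊞ T₂.obj₁
  obj₂ := T₁.obj₂ ⊞ T₂.obj₂
  obj₃ := T₁.obj₃ ⊞ T₂.obj₃
  mor₁ := biprod.map T₁.mor₁ T₂.mor₁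
  mor₂ := biprod.map T₁.mor₂ T₂.mor₂
  mor₃ := biprod.map T₁.mor₃ T₂.mor₃ ≫ (shiftFunctor C (1 : ℤ)).biprodComparison' _ _

noncomputable def biprodTriangleBicone (T₁ T₂ : Triangle C) : BinaryBicone T₁ T₂ where
  pt := biprodTriangle T₁ T₂
  fst := Triangle.homMk _ _ biprod.fst biprod.fst biprod.fst (by simp) (by simp)
    (by apply biprod.hom_ext' <;> simp [← Functor.map_comp])
  snd := Triangle.homMk _ _ biprod.snd biprod.snd biprod.snd (by simp) (by simp)
    (by apply biprod.hom_ext' <;> simp [← Functor.map_comp])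
  inl := Triangle.homMk _ _ biprod.inl biprod.inl biprod.inl (by simp) (by simp) (by simp)
  inr := Triangle.homMk _ _ biprod.inr biprod.inr biprod.inr (by simp) (by simp) (by simp)
  inl_fst := by ext <;> exact biprod.inl_fst
  inl_snd := by ext <;> exact biprod.inl_snd
  inr_fst := by ext <;> exact biprod.inr_fst
  inr_snd := by ext <;> exact biprod.inr_snd

noncomputable def isBilimitBiprodTriangleBicone (T₁ T₂ : Triangle C) :
    (biprodTriangleBicone T₁ T₂).IsBilimit :=
  isBinaryBilimitOfTotal _ (by ext <;> exact biprod.total)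

noncomputable def biprodTriangleMor₃ArrowIso (T₁ T₂ : Triangle C) :
    Arrow.mk (biprodTriangle T₁ T₂).mor₃ ≅ Arrow.mk (biprod.map T₁.mor₃ T₂.mor₃) :=
  haveI := preservesBinaryBiproducts_of_preservesBiproducts (shiftFunctor C (1 : ℤ))
  Arrow.isoMk (Iso.refl _) ((shiftFunctor C (1 : ℤ)).mapBiprod _ _) (by
    -- `biprodComparison'` is `(mapBiprod _ _).inv` by definition
    change _ = (_ ≫ ((shiftFunctor C (1 : ℤ)).mapBiprod _ _).inv) ≫ _
    rw [Category.assoc, Iso.inv_hom_id, Category.comp_id]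
    exact Category.id_comp _)

end Triangles

section Pretriangulated

variable {C : Type u'} [Category.{v} C] [Preadditive C] [HasZeroObject C] [HasShift C ℤ]
  [∀ n : ℤ, (shiftFunctor C n).Additive] [Pretriangulated C]

lemma biprodTriangle_distinguished {T₁ T₂ : Triangle C} (h₁ : T₁ ∈ distTriang C)
    (h₂ : T₂ ∈ distTriang C) : biprodTriangle T₁ T₂ ∈ distTriang C := by
  let T : WalkingPair → Triangle C := fun j => WalkingPair.casesOn j T₁ T₂
  refine isomorphic_distinguished _ (productTriangle_distinguished T ?_) _
    ((isBilimitBiprodTriangleBicone T₁ T₂).isLimit.conePointUniqueUpToIso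
      (productTriangle.isLimitFan T))
  rintro (_ | _) <;> assumption

lemma nonempty_iso_obj₂_of_arrow_iso_mor₃ {T T' : Triangle C} (hT : T ∈ distTriang C)
    (hT' : T' ∈ distTriang C) (e : Arrow.mk T.mor₃ ≅ Arrow.mk T'.mor₃) :
    Nonempty (T.obj₂ ≅ T'.obj₂) := by
  -- two rotations move `mor₃` to the first and `obj₂⟦1⟧` to the third position
  obtain ⟨e', -⟩ := exists_iso_of_arrow_iso _ _ (rot_of_distTriang _ (rot_of_distTriang _ hT))
    (rot_of_distTriang _ (rot_of_distTriang _ hT')) e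
  exact ⟨(shiftFunctor C (1 : ℤ)).preimageIso (Triangle.π₃.mapIso e')⟩

lemma nonempty_biprod_iso_of_comparison_maps {T T' : Triangle C} (hT : T ∈ distTriang C)
    (hT' : T' ∈ distTriang C) (f : T.obj₃ ⟶ T'.obj₃) (g : T'.obj₃ ⟶ T.obj₃)
    (hf : T.mor₂ ≫ f ≫ T'.mor₃ = 0) (hg : T'.mor₂ ≫ g ≫ T.mor₃ = 0)
    (hfg : f ≫ g ≫ T.mor₃ = T.mor₃) (hgf : g ≫ f ≫ T'.mor₃ = T'.mor₃) :
    Nonempty (T.obj₂ ⊞ (T'.obj₁ ⊞ T'.obj₃) ≅ T'.obj₂ ⊞ (T.obj₁ ⊞ T.obj₃)) := by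
  obtain ⟨w, hw⟩ := T.yoneda_exact₃ hT _ hf
  obtain ⟨w', hw'⟩ := T'.yoneda_exact₃ hT' _ hg
  have hww' : T.mor₃ ≫ w ≫ w' = T.mor₃ := by rw [← reassoc_of% hw, ← hw', hfg]
  exact nonempty_iso_obj₂_of_arrow_iso_mor₃
    (biprodTriangle_distinguished hT (binaryBiproductTriangle_distinguished _ _))
    (biprodTriangle_distinguished hT' (binaryBiproductTriangle_distinguished _ _))
    (biprodTriangleMor₃ArrowIso _ _ ≪≫ arrowIsoBiprodMapZero hw.symm hww' hgf ≪≫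
      (biprodTriangleMor₃ArrowIso T' (binaryBiproductTriangle T.obj₁ T.obj₃)).symm)

end Pretriangulated

open Stmt6

theorem stmt6 (C : Type u) [SmallCategory C] [Preadditive C] [HasZeroObject C]
    [HasShift C ℤ] [∀ n : ℤ, (shiftFunctor C n).Additive] [Pretriangulated C]
    [IsIdempotentComplete C]
    (A B C₀ : C) (a : A ⟶ B) (b : B ⟶ C₀) (c : C₀ ⟶ A⟦(1 : ℤ)⟧)
    (hT : Triangle.mk a b c ∈ distTriang C)
    (A' B' C₀' : C) (a' : A' ⟶ B') (b' : B' ⟶ C₀') (c' : C₀' ⟶ A'⟦(1 : ℤ)⟧)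
    (hT' : Triangle.mk a' b' c' ∈ distTriang C)
    (hiso : Nonempty ((image (preadditiveYoneda.map c) : Cᵒᵖ ⥤ AddCommGrpCat.{u}) ≅
        image (preadditiveYoneda.map c'))) :
    clsSp C A - clsSp C B + clsSp C C₀ = clsSp C A' - clsSp C B' + clsSp C C₀' := by
  obtain ⟨α⟩ := hiso
  obtain ⟨f, g, hfg, hgf, hf, hg⟩ := exists_comparison_maps_of_image_preadditiveYoneda_iso c c' α
  obtain ⟨e⟩ := nonempty_biprod_iso_of_comparison_maps hT hT' f g
    (hf b (comp_distTriang_mor_zero₂₃ _ hT)) (hg b' (comp_distTriang_mor_zero₂₃ _ hT')) hfg hgf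
  exact clsSp_sub_add_eq_of_iso e
end

section
/- Let C be a Krull–Schmidt triangulated category, X a contravariantly finite additive subcategory, and C₀ a rigid object (i.e. C(C₀, ΣC₀) = 0). If X₁ →^x X₀ →^y C₀ →^z ΣX₁ is a triangle in which y is a minimal right X-approximation of C₀, then every morphism f : X₁ → X₀ is radical; in particular, X₀ and X₁ have no nonzero direct summands in common, even up to isomorphism. -/
/-!
STATEMENT 13: Let `C` be a Krull–Schmidt triangulated category, `X` a contravariantly finite
additive subcategory, and `C₀` a rigid object (`C(C₀, ΣC₀) = 0`). If
`X₁ →^x X₀ →^y C₀ →^z ΣX₁` is a triangle in which `y` is a minimal right `X`-approximation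
of `C₀`, then every morphism `f : X₁ → X₀` is radical; in particular `X₀` and `X₁` have no
nonzero direct summands in common, even up to isomorphism.
-/

/-!
Suppose `Z` is a summand of both `X₀` and `X₁`, with inclusions `i : Z ⟶ X₀`, `j : Z ⟶ X₁`.
Rigidity of `C₀` makes every morphism `X₁ ⟶ C₀` factor through `x`, and the approximation
property lifts the factor through `y`; together this gives `g : X₀ ⟶ X₀` with
`j ≫ x ≫ g ≫ y = i ≫ y`. For a right minimal `y`, any morphism agreeing with a split mono
after composing with `y` is itself a split mono, so `j ≫ x` is a split mono. But it is
killed by `y`, and by minimality once more a split mono into `X₀` killed by `y` has zero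
source.
A nonradical `f : X₁ ⟶ X₀` would exhibit a common nonzero summand.
-/

open CategoryTheory Limits Pretriangulated

universe u

namespace Stmt13

variable {C : Type u} [Category.{u} C] [Preadditive C]

/-- An object is indecomposable if it is nonzero and its only idempotent endomorphisms
are `0` and the identity. -/
def IsIndecObj (Z : C) : Prop :=
  ¬ IsZero Z ∧ ∀ e : Z ⟶ Z, e ≫ e = e → e = 0 ∨ e = 𝟙 Z

/-- `U` is a direct summand of `Z`. -/
def IsSummand (U Z : C) : Prop := ∃ (i : U ⟶ Z) (p : Z ⟶ U), i ≫ p = 𝟙 U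

/-- A morphism is radical if none of its components between indecomposable direct summands
is an isomorphism. -/
def IsRadicalHom {A B : C} (f : A ⟶ B) : Prop :=
  ∀ (Z W : C) (i : Z ⟶ A) (p : B ⟶ W), IsIndecObj Z → IsIndecObj W →
    IsSplitMono i → IsSplitEpi p → ¬ IsIso (i ≫ f ≫ p)

end Stmt13

section

variable {C : Type*} [Category C] [Preadditive C] [HasZeroObject C] [HasShift C ℤ]
  [∀ n : ℤ, (CategoryTheory.shiftFunctor C n).Additive] [Pretriangulated C]

lemma CategoryTheory.Pretriangulated.Triangle.yoneda_exact₁ (T : Triangle C)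
    (hT : T ∈ distTriang C) {A : C} (f : T.obj₁ ⟶ A) (hf : T.mor₃ ≫ f⟦(1 : ℤ)⟧' = 0) :
    ∃ g : T.obj₂ ⟶ A, f = T.mor₁ ≫ g := by
  obtain ⟨g, hg⟩ : ∃ g : T.obj₂⟦(1 : ℤ)⟧ ⟶ A⟦(1 : ℤ)⟧, f⟦(1 : ℤ)⟧' = (-T.mor₁⟦(1 : ℤ)⟧') ≫ g :=
    Triangle.yoneda_exact₂ _ (rot_of_distTriang _ (rot_of_distTriang _ hT)) _ hf
  refine ⟨(CategoryTheory.shiftFunctor C (1 : ℤ)).preimage (-g),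
    (CategoryTheory.shiftFunctor C (1 : ℤ)).map_injective ?_⟩
  simp [hg]

end

namespace Stmt13

lemma isSplitMono_of_comp {C : Type*} [Category C] {A B D : C} (f : A ⟶ B) (g : B ⟶ D)
    [IsSplitMono (f ≫ g)] : IsSplitMono f :=
  ⟨⟨⟨g ≫ retraction (f ≫ g), by rw [← Category.assoc, IsSplitMono.id]⟩⟩⟩

variable {C : Type u} [Category.{u} C] [Preadditive C]

def IsRightMinimal {X₀ C₀ : C} (y : X₀ ⟶ C₀) : Prop :=
  ∀ h : X₀ ⟶ X₀, h ≫ y = y → IsIso h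

namespace IsRightMinimal

variable {X₀ C₀ Z : C} {y : X₀ ⟶ C₀}

lemma isSplitMono_of_comp_eq (hy : IsRightMinimal y) {i u : Z ⟶ X₀} [IsSplitMono i]
    (hu : u ≫ y = i ≫ y) : IsSplitMono u := by
  let h : X₀ ⟶ X₀ := 𝟙 X₀ - retraction i ≫ i + retraction i ≫ u
  have hh : h ≫ y = y := by
    simp only [h, Preadditive.add_comp, Preadditive.sub_comp, Category.id_comp,
      Category.assoc, hu, sub_add_cancel]
  have : IsIso h := hy h hh
  have hih : i ≫ h = u := by
    simp only [h, Preadditive.comp_add, Preadditive.comp_sub, Category.comp_id,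
      IsSplitMono.id_assoc, sub_self, zero_add]
  exact ⟨⟨⟨inv h ≫ retraction i, by rw [← hih]; simp⟩⟩⟩

lemma isZero_of_isSplitMono_of_comp_eq_zero (hy : IsRightMinimal y) (i : Z ⟶ X₀) [IsSplitMono i]
    (hi : i ≫ y = 0) : IsZero Z := by
  have : IsSplitMono (0 : Z ⟶ X₀) := hy.isSplitMono_of_comp_eq (i := i) (by rw [hi, zero_comp])
  rw [IsZero.iff_id_eq_zero, ← IsSplitMono.id (0 : Z ⟶ X₀), zero_comp]

end IsRightMinimal

lemma isZero_of_isSummand_of_isSummand {X₁ X₀ C₀ Z : C} {x : X₁ ⟶ X₀} {y : X₀ ⟶ C₀}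
    (hy : IsRightMinimal y) (hxy : x ≫ y = 0) (hlift : ∀ n : X₀ ⟶ C₀, ∃ g, g ≫ y = n)
    (hfac : ∀ a : X₁ ⟶ C₀, ∃ n, a = x ≫ n)
    (h₁ : IsSummand Z X₁) (h₀ : IsSummand Z X₀) : IsZero Z := by
  obtain ⟨j, q, hjq⟩ := h₁
  obtain ⟨i, p, hip⟩ := h₀
  have : IsSplitMono i := ⟨⟨⟨p, hip⟩⟩⟩
  obtain ⟨n, hn⟩ := hfac (q ≫ i ≫ y)
  obtain ⟨g, rfl⟩ := hlift n
  have hu : ((j ≫ x) ≫ g) ≫ y = i ≫ y := by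
    simp only [Category.assoc, ← hn, reassoc_of% hjq]
  have := hy.isSplitMono_of_comp_eq hu
  have := isSplitMono_of_comp (j ≫ x) g
  exact hy.isZero_of_isSplitMono_of_comp_eq_zero (j ≫ x) (by simp [hxy])

lemma isRadicalHom_of_isZero_of_isSummand {A B : C}
    (h : ∀ Z : C, IsSummand Z A → IsSummand Z B → IsZero Z) (f : A ⟶ B) : IsRadicalHom f := by
  intro Z W i p hZ _ _ _ hiso
  refine hZ.1 (h Z ⟨i, retraction i, IsSplitMono.id i⟩ ⟨i ≫ f, p ≫ inv (i ≫ f ≫ p), ?_⟩)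
  simp only [← Category.assoc] at hiso ⊢
  exact IsIso.hom_inv_id _

end Stmt13

open Stmt13

theorem stmt13 (C : Type u) [SmallCategory C] [Preadditive C] [HasZeroObject C]
    [HasShift C ℤ] [∀ n : ℤ, (shiftFunctor C n).Additive] [Pretriangulated C]
    [HasFiniteBiproducts C]
    -- `C` is Krull–Schmidt: every object is a finite biproduct of objects with local
    -- endomorphism rings:
    (hKS : ∀ Z : C, ∃ (k : ℕ) (f : Fin k → C),
      (∀ i, IsLocalRing (End (f i))) ∧ Nonempty (Z ≅ ⨁ f))
    -- `X` is an additive subcategory, given by its class of objects `S`: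
    (S : Set C)
    (hiso : ∀ A B : C, A ∈ S → Nonempty (A ≅ B) → B ∈ S)
    (hsum : ∀ A B : C, A ∈ S → B ∈ S →
      ∀ (bc : BinaryBicone A B), bc.IsBilimit → bc.pt ∈ S)
    (hsummand : ∀ (A Z : C), A ∈ S → IsSummand Z A → Z ∈ S)
    -- `X` is contravariantly finite:
    (hcf : ∀ Cc : C, ∃ X' ∈ S, ∃ x : X' ⟶ Cc,
      ∀ Z ∈ S, ∀ f : Z ⟶ Cc, ∃ g : Z ⟶ X', g ≫ x = f)
    -- `C₀` is rigid:
    (C₀ : C) (hrigid : ∀ g : C₀ ⟶ C₀⟦(1 : ℤ)⟧, g = 0)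
    -- the triangle, with `y` a minimal right `X`-approximation:
    (X₁ X₀ : C) (x : X₁ ⟶ X₀) (y : X₀ ⟶ C₀) (z : C₀ ⟶ X₁⟦(1 : ℤ)⟧)
    (hT : Triangle.mk x y z ∈ (distTriang C))
    (hX₀ : X₀ ∈ S)
    (happrox : ∀ Z ∈ S, ∀ f : Z ⟶ C₀, ∃ g : Z ⟶ X₀, g ≫ y = f)
    (hmin : ∀ h : X₀ ⟶ X₀, h ≫ y = y → IsIso h) :
    (∀ f : X₁ ⟶ X₀, IsRadicalHom f) ∧
    (∀ Z : C, ¬ IsZero Z → IsSummand Z X₀ → IsSummand Z X₁ → False) := by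
  have hcommon : ∀ Z : C, IsSummand Z X₁ → IsSummand Z X₀ → IsZero Z := fun Z =>
    isZero_of_isSummand_of_isSummand hmin (comp_distTriang_mor_zero₁₂ _ hT)
      (happrox X₀ hX₀) (fun a => Triangle.yoneda_exact₁ _ hT a (hrigid _))
  exact ⟨isRadicalHom_of_isZero_of_isSummand hcommon, fun Z hZ h₀ h₁ => hZ (hcommon Z h₁ h₀)⟩
end

section
/- Let S be a disc with marked points M̄_n (discrete points with n two-sided accumulation points, accumulation points included) and let Y be the mutation of a triangulation X of (S, M̄_n) at an arc X₀, i.e. Y = (X \ {X₀}) ∪ {Y₀} for a unique arc Y₀ ≠ X₀. If X is a fan triangulation, then Y is a fan triangulation; if the subcategory of C̄_n generated by X is rigid, then so is the subcategory generated by Y. -/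
/-!
STATEMENT 16: Let `S` be a disc with marked points `M̄_n` and let `Y` be the mutation of a
triangulation `X` of `(S, M̄_n)` at an arc `X₀`, i.e. `Y = (X \ {X₀}) ∪ {Y₀}` for a unique
arc `Y₀ ≠ X₀`. If `X` is a fan triangulation, then `Y` is a fan triangulation; if the
subcategory of `C̄_n` generated by `X` is rigid, then so is the subcategory generated by
`Y` (rigidity is expressed combinatorially via the vanishing-of-`Ext¹` criterion).
-/

/-! Combinatorial model of the disc `(S, M̄_n)`. -/

namespace PY

/-- The set of marked points `M̄_n`: `n` sectors (ordered anticlockwise), each consisting of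
an accumulation point `⊥` followed by a `ℤ`-indexed family of ordinary marked points. -/
abbrev Pt (n : ℕ) := Fin n ×ₗ (WithBot ℤ)

/-- A point is an accumulation point. -/
def isAcc {n : ℕ} (p : Pt n) : Prop := (ofLex p).2 = ⊥

/-- The anticlockwise successor `p⁺` of a marked point; by convention `p⁺ = p` for an
accumulation point `p`. -/
def succPt {n : ℕ} (p : Pt n) : Pt n := toLex ((ofLex p).1, (ofLex p).2.map (· + 1))

/-- The clockwise predecessor `p⁻`; by convention `p⁻ = p` for an accumulation point. -/
def predPt {n : ℕ} (p : Pt n) : Pt n := toLex ((ofLex p).1, (ofLex p).2.map (· - 1))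

/-- `z` lies in the closed anticlockwise interval `[x, y]`. -/
def inCC {n : ℕ} (x y z : Pt n) : Prop :=
  if x ≤ y then (x ≤ z ∧ z ≤ y) else (x ≤ z ∨ z ≤ y)

/-- `z` lies strictly between `x` and `y` anticlockwise (the open interval `(x, y)`). -/
def strictBtw {n : ℕ} (x y z : Pt n) : Prop := inCC x y z ∧ z ≠ x ∧ z ≠ y

/-- An arc, given by its two endpoints. -/
structure Arc (n : ℕ) where
  e1 : Pt n
  e2 : Pt n

/-- An arc is valid if its endpoints are distinct, non-neighbouring marked points. -/
def Arc.valid {n : ℕ} (A : Arc n) : Prop :=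
  A.e1 ≠ A.e2 ∧ A.e2 ≠ succPt A.e1 ∧ A.e1 ≠ succPt A.e2

/-- Two arcs coincide (as unordered pairs of endpoints). -/
def sameArc {n : ℕ} (A B : Arc n) : Prop :=
  (A.e1 = B.e1 ∧ A.e2 = B.e2) ∨ (A.e1 = B.e2 ∧ A.e2 = B.e1)

/-- Two arcs cross transversely: the endpoints of one strictly separate the endpoints of
the other. -/
def crossing {n : ℕ} (A B : Arc n) : Prop :=
  (strictBtw A.e1 A.e2 B.e1 ∧ strictBtw A.e2 A.e1 B.e2) ∨
  (strictBtw A.e1 A.e2 B.e2 ∧ strictBtw A.e2 A.e1 B.e1)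

/-- A triangulation: a maximal set of valid, pairwise non-transversely-crossing arcs. -/
def IsTriangulation {n : ℕ} (T : Set (Arc n)) : Prop :=
  (∀ A ∈ T, A.valid) ∧
  (∀ A ∈ T, ∀ B ∈ T, ¬ crossing A B) ∧
  (∀ B : Arc n, B.valid → (∀ A ∈ T, ¬ crossing A B) → ∃ A ∈ T, sameArc A B)

/-- Two arcs share an endpoint. -/
def sharesEndpoint {n : ℕ} (A B : Arc n) : Prop :=
  A.e1 = B.e1 ∨ A.e1 = B.e2 ∨ A.e2 = B.e1 ∨ A.e2 = B.e2

/-- An infinite leapfrog in a set of arcs: two infinite families `A_i`, `B_i` of pairwise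
distinct, pairwise non-crossing arcs with the prescribed incidences, all crossed by a
common curve. -/
def IsInfiniteLeapfrog {n : ℕ} (T : Set (Arc n)) : Prop :=
  ∃ I : Set ℤ, (I = Set.univ ∨ I = {i | i ≤ 0} ∨ I = {i | 0 ≤ i}) ∧
  ∃ A B : ℤ → Arc n,
    (∀ i ∈ I, A i ∈ T ∧ B i ∈ T) ∧
    (∀ i ∈ I, ∀ j ∈ I, i ≠ j → ¬ sameArc (A i) (A j) ∧ ¬ sameArc (B i) (B j)) ∧
    (∀ i ∈ I, ∀ j ∈ I, ¬ sameArc (A i) (B j)) ∧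
    (∀ i ∈ I, ∀ j ∈ I, ¬ crossing (A i) (A j) ∧ ¬ crossing (B i) (B j) ∧
      ¬ crossing (A i) (B j)) ∧
    (∀ i ∈ I, sharesEndpoint (A i) (B i)) ∧
    (∀ i ∈ I, (i - 1) ∈ I → sharesEndpoint (A i) (B (i - 1))) ∧
    (∃ c d : Pt n, ∀ i ∈ I, crossing (A i) ⟨c, d⟩ ∧ crossing (B i) ⟨c, d⟩)

/-- A fan triangulation: a triangulation with no infinite leapfrog. -/
def IsFanTriangulation {n : ℕ} (T : Set (Arc n)) : Prop :=
  IsTriangulation T ∧ ¬ IsInfiniteLeapfrog T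

/-- The combinatorial criterion for `Ext¹(C, A) ≠ 0` between the indecomposables
corresponding to two arcs (property (P3) of the completed discrete cluster category). -/
def extNonzero {n : ℕ} (Cc A : Arc n) : Prop :=
  crossing Cc A ∨
  (¬ sameArc Cc A ∧ ∃ p c0 a0 : Pt n, isAcc p ∧ c0 ≠ p ∧ a0 ≠ p ∧
    ({Cc.e1, Cc.e2} : Set (Pt n)) = {p, c0} ∧ ({A.e1, A.e2} : Set (Pt n)) = {p, a0} ∧
    ¬ strictBtw c0 a0 p) ∨
  (sameArc Cc A ∧ isAcc A.e1 ∧ isAcc A.e2)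

/-- A set of arcs is rigid if `Ext¹` vanishes between (the objects corresponding to) any
two of its arcs. -/
def RigidSet {n : ℕ} (T : Set (Arc n)) : Prop :=
  ∀ A ∈ T, ∀ Cc ∈ T, ¬ extNonzero Cc A

/-- `Y` is the mutation of the triangulation `T` at the arc `X₀ ∈ T`. -/
def IsMutation {n : ℕ} (T Y : Set (Arc n)) (X₀ : Arc n) : Prop :=
  X₀ ∈ T ∧ IsTriangulation Y ∧
  ∃ Y₀ : Arc n, Y₀ ∉ T ∧ ¬ sameArc Y₀ X₀ ∧ Y = (T \ {X₀}) ∪ {Y₀}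

end PY

/-!
Mutation exchanges the single arc `X₀` for `Y₀`. An infinite leapfrog uses each arc at most
once, so a tail of an infinite leapfrog of `Y` avoids `Y₀` and is an infinite leapfrog of `T`.

For rigidity, if `Y₀` is already an arc of `T` up to orientation there is nothing to prove.
Otherwise `Y₀ = pq` crosses `X₀ = uv` and no other arc of `T`. If `p` were an accumulation
point, every arc crossing a side `pu` or `pv` of the quadrilateral `upvq` would cross one of its
diagonals `X₀`, `Y₀`, so by maximality `pu` and `pv` would both be arcs of `T`; but two distinct
arcs at an accumulation point have non-vanishing `Ext¹` in one direction. Hence `Y₀` has no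
accumulation endpoint, so `Ext¹` between it and an arc of `Y` could only come from a crossing,
which a triangulation does not have.
-/

lemma Finset.exists_strictMonoOn_nat {α : Type*} [LinearOrder α] (s : Finset α) :
    ∃ f : α → ℕ, StrictMonoOn f s := by
  classical
  refine ⟨fun x => (s.filter (· < x)).card, fun x hx y _ hxy => ?_⟩
  have hsub : s.filter (· < x) ⊆ s.filter (· < y) := by
    intro z
    simp only [Finset.mem_filter]
    exact fun hz => ⟨hz.1, hz.2.trans hxy⟩
  exact Finset.card_lt_card <| (Finset.ssubset_iff_of_subset hsub).2 ⟨x, by simp_all, by simp⟩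

namespace PY

variable {n : ℕ}

section CyclicOrder

lemma strictBtw_iff (x y z : Pt n) :
    strictBtw x y z ↔ x < z ∧ z < y ∨ y < x ∧ x < z ∨ z < y ∧ y < x := by
  unfold strictBtw inCC
  split_ifs with h
  · constructor
    · rintro ⟨⟨hxz, hzy⟩, hzx, hzy'⟩
      exact Or.inl ⟨lt_of_le_of_ne hxz (Ne.symm hzx), lt_of_le_of_ne hzy hzy'⟩
    · rintro (⟨h1, h2⟩ | ⟨h1, h2⟩ | ⟨h1, h2⟩)
      · exact ⟨⟨h1.le, h2.le⟩, h1.ne', h2.ne⟩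
      all_goals order
  · grind

lemma not_strictBtw_swap {x y z : Pt n} (h : strictBtw x y z) : ¬ strictBtw y x z := by
  intro h'
  rw [strictBtw_iff] at h h'
  rcases h with ⟨h1, h2⟩ | ⟨h1, h2⟩ | ⟨h1, h2⟩ <;>
    rcases h' with ⟨h3, h4⟩ | ⟨h3, h4⟩ | ⟨h3, h4⟩ <;> order

lemma crossing_swap_left (a b : Pt n) (C : Arc n) :
    crossing ⟨a, b⟩ C ↔ crossing ⟨b, a⟩ C := by
  simp only [crossing]
  tauto

lemma crossing_swap_right (A : Arc n) (c d : Pt n) :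
    crossing A ⟨c, d⟩ ↔ crossing A ⟨d, c⟩ :=
  Or.comm

/- The points are ranked in `ℕ` along a map that is strictly monotone on them, which turns
the statement into linear arithmetic. -/
lemma crossing_diagonal_of_strictBtw {a b p q u v w : Pt n} (hup : strictBtw u v p)
    (hvq : strictBtw v u q) (hw : w = u ∨ w = v) (hap : strictBtw a b p)
    (hbw : strictBtw b a w) :
    crossing ⟨a, b⟩ ⟨u, v⟩ ∨ crossing ⟨a, b⟩ ⟨p, q⟩ := by
  obtain ⟨f, hf⟩ := Finset.exists_strictMonoOn_nat {a, b, p, q, u, v, w}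
  simp only [crossing, strictBtw_iff, ← hf.lt_iff_lt, ← hf.injOn.eq_iff, Finset.coe_insert,
    Finset.coe_singleton, Set.mem_insert_iff, Set.mem_singleton_iff, true_or, or_true]
    at hw hup hvq hap hbw ⊢
  rcases hup with h1 | h1 | h1 <;> rcases hvq with h2 | h2 | h2 <;>
    rcases hap with h3 | h3 | h3 <;> rcases hbw with h4 | h4 | h4 <;> omega

lemma crossing_diagonal_of_crossing_side {A : Arc n} {p q u v w : Pt n}
    (hX : crossing ⟨u, v⟩ ⟨p, q⟩) (hw : w = u ∨ w = v) (hA : crossing A ⟨p, w⟩) :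
    crossing A ⟨u, v⟩ ∨ crossing A ⟨p, q⟩ := by
  obtain ⟨a, b⟩ := A
  rcases hX with ⟨hup, hvq⟩ | ⟨huq, hvp⟩
  · rcases hA with ⟨hap, hbw⟩ | ⟨haw, hbp⟩
    · exact crossing_diagonal_of_strictBtw hup hvq hw hap hbw
    · simpa only [crossing_swap_left b a] using crossing_diagonal_of_strictBtw hup hvq hw hbp haw
  · rw [crossing_swap_right _ u v]
    rcases hA with ⟨hap, hbw⟩ | ⟨haw, hbp⟩
    · exact crossing_diagonal_of_strictBtw hvp huq hw.symm hap hbw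
    · simpa only [crossing_swap_left b a] using
        crossing_diagonal_of_strictBtw hvp huq hw.symm hbp haw

end CyclicOrder

section Arcs

def Arc.ends (A : Arc n) : Set (Pt n) := {A.e1, A.e2}

lemma sameArc_iff {A B : Arc n} : sameArc A B ↔ A.ends = B.ends :=
  Set.pair_eq_pair_iff.symm

lemma sameArc_refl (A : Arc n) : sameArc A A :=
  sameArc_iff.2 rfl

lemma sameArc_comm {A B : Arc n} : sameArc A B ↔ sameArc B A := by
  simp only [sameArc_iff, eq_comm]

lemma exists_sameArc_of_mem_ends {B : Arc n} {x : Pt n} (hx : x ∈ B.ends) :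
    ∃ y, sameArc B ⟨x, y⟩ := by
  rcases hx with rfl | rfl
  exacts [⟨B.e2, Or.inl ⟨rfl, rfl⟩⟩, ⟨B.e1, Or.inr ⟨rfl, rfl⟩⟩]

lemma crossing_congr_left {A A' : Arc n} (h : sameArc A A') (B : Arc n) :
    crossing A B ↔ crossing A' B := by
  obtain ⟨a1, a2⟩ := A
  rcases h with ⟨rfl, rfl⟩ | ⟨rfl, rfl⟩
  exacts [Iff.rfl, crossing_swap_left _ _ _]

lemma crossing_congr_right (A : Arc n) {B B' : Arc n} (h : sameArc B B') :
    crossing A B ↔ crossing A B' := by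
  obtain ⟨b1, b2⟩ := B
  rcases h with ⟨rfl, rfl⟩ | ⟨rfl, rfl⟩
  exacts [Iff.rfl, crossing_swap_right _ _ _]

lemma ne_of_crossing {A B : Arc n} (h : crossing A B) {x : Pt n} (hx : x ∈ A.ends) :
    B.e1 ≠ x ∧ B.e2 ≠ x := by
  rcases hx with rfl | rfl <;> unfold crossing strictBtw at h <;> tauto

lemma isAcc_succPt_iff {p : Pt n} : isAcc (succPt p) ↔ isAcc p :=
  WithBot.map_eq_bot_iff

lemma succPt_eq_self {p : Pt n} (hp : isAcc p) : succPt p = p := by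
  unfold succPt
  unfold isAcc at hp
  rw [hp, WithBot.map_bot, ← hp]
  rfl

lemma Arc.valid_of_isAcc {p u : Pt n} (hp : isAcc p) (hu : u ≠ p) : Arc.valid ⟨p, u⟩ := by
  refine ⟨hu.symm, by rwa [succPt_eq_self hp], fun h => ?_⟩
  change p = succPt u at h
  rw [succPt_eq_self (isAcc_succPt_iff.1 (h ▸ hp))] at h
  exact hu h.symm

end Arcs

section Ext

lemma extNonzero_of_sameArc {C C' A A' : Arc n} (hC : sameArc C C') (hA : sameArc A A')
    (h : extNonzero C A) : extNonzero C' A' := by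
  rcases h with h | ⟨hne, p, c0, a0, hp, hc0, ha0, hCe, hAe, hb⟩ | ⟨hCA, h1, h2⟩
  · exact Or.inl ((crossing_congr_right _ hA).1 ((crossing_congr_left hC A).1 h))
  · rw [sameArc_iff] at hC hA
    refine Or.inr (Or.inl ⟨?_, p, c0, a0, hp, hc0, ha0, hC.symm.trans hCe, hA.symm.trans hAe, hb⟩)
    rwa [sameArc_iff, ← hC, ← hA, ← sameArc_iff]
  · have hacc : ∀ x ∈ A.ends, isAcc x := by rintro x (rfl | rfl) <;> assumption
    rw [sameArc_iff] at hC hA hCA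
    refine Or.inr (Or.inr ⟨sameArc_iff.2 (hC.symm.trans (hCA.trans hA)), hacc _ ?_, hacc _ ?_⟩)
    all_goals rw [hA]
    exacts [Or.inl rfl, Or.inr rfl]

lemma extNonzero_or_extNonzero_of_isAcc {p u v : Pt n} (hp : isAcc p) (hu : u ≠ p) (hv : v ≠ p)
    (huv : u ≠ v) : extNonzero ⟨p, u⟩ ⟨p, v⟩ ∨ extNonzero ⟨p, v⟩ ⟨p, u⟩ := by
  have hne : ¬ sameArc ⟨p, u⟩ ⟨p, v⟩ := by
    rintro (⟨-, h⟩ | ⟨h, -⟩)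
    exacts [huv h, hv h.symm]
  by_cases h : strictBtw u v p
  · exact Or.inr (Or.inr (Or.inl ⟨fun h' => hne (sameArc_comm.1 h'), p, v, u, hp, hv, hu, rfl,
      rfl, not_strictBtw_swap h⟩))
  · exact Or.inl (Or.inr (Or.inl ⟨hne, p, u, v, hp, hu, hv, rfl, rfl, h⟩))

lemma crossing_or_exists_isAcc {C A : Arc n} (h : extNonzero C A) :
    crossing C A ∨ (∃ x ∈ C.ends, isAcc x) ∧ ∃ x ∈ A.ends, isAcc x := by
  rcases h with h | ⟨-, p, c0, a0, hp, -, -, hCe, hAe, -⟩ | ⟨hCA, h1, -⟩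
  · exact Or.inl h
  · refine Or.inr ⟨⟨p, ?_, hp⟩, p, ?_, hp⟩
    · rw [show C.ends = _ from hCe]; exact Or.inl rfl
    · rw [show A.ends = _ from hAe]; exact Or.inl rfl
  · refine Or.inr ⟨⟨A.e1, ?_, h1⟩, A.e1, Or.inl rfl, h1⟩
    rw [sameArc_iff.1 hCA]
    exact Or.inl rfl

end Ext

section Rigid

variable {T : Set (Arc n)}

lemma RigidSet.of_forall_exists_sameArc {Y : Set (Arc n)} (hT : RigidSet T)
    (h : ∀ A ∈ Y, ∃ C ∈ T, sameArc C A) : RigidSet Y := by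
  intro A hA C hC hCA
  obtain ⟨A', hA', hAA'⟩ := h A hA
  obtain ⟨C', hC', hCC'⟩ := h C hC
  exact hT A' hA' C' hC' (extNonzero_of_sameArc (sameArc_comm.1 hCC') (sameArc_comm.1 hAA') hCA)

lemma RigidSet.eq_of_sameArc_of_isAcc (hT : RigidSet T) {C D : Arc n} (hC : C ∈ T) (hD : D ∈ T)
    {p u v : Pt n} (hCp : sameArc C ⟨p, u⟩) (hDp : sameArc D ⟨p, v⟩) (hp : isAcc p)
    (hu : u ≠ p) (hv : v ≠ p) : u = v := by
  by_contra huv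
  rcases extNonzero_or_extNonzero_of_isAcc hp hu hv huv with h | h
  · exact hT D hD C hC (extNonzero_of_sameArc (sameArc_comm.1 hCp) (sameArc_comm.1 hDp) h)
  · exact hT C hC D hD (extNonzero_of_sameArc (sameArc_comm.1 hDp) (sameArc_comm.1 hCp) h)

lemma IsTriangulation.not_isAcc_of_crossing_only (hT : IsTriangulation T) (hrig : RigidSet T)
    {X₀ B : Arc n} (hX₀ : X₀ ∈ T) (hcross : crossing X₀ B)
    (honly : ∀ A ∈ T, A ≠ X₀ → ¬ crossing A B) : ∀ p ∈ B.ends, ¬ isAcc p := by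
  intro p hpB hp
  obtain ⟨q, hBq⟩ := exists_sameArc_of_mem_ends hpB
  rw [crossing_congr_right _ hBq] at hcross
  have hside : ∀ w ∈ X₀.ends, ∃ C ∈ T, sameArc C ⟨p, w⟩ := by
    intro w hw
    refine hT.2.2 _ (Arc.valid_of_isAcc hp ?_) fun A hA hAw => ?_
    · rintro rfl
      exact (ne_of_crossing hcross hw).1 rfl
    by_cases hAX : A = X₀
    · subst hAX
      exact (ne_of_crossing hAw hw).2 rfl
    rcases crossing_diagonal_of_crossing_side hcross hw hAw with h | h
    · exact hT.2.1 A hA X₀ hX₀ h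
    · exact honly A hA hAX ((crossing_congr_right _ hBq).2 h)
  obtain ⟨C, hC, hCp⟩ := hside X₀.e1 (Or.inl rfl)
  obtain ⟨D, hD, hDp⟩ := hside X₀.e2 (Or.inr rfl)
  exact (hT.1 X₀ hX₀).1 (hrig.eq_of_sameArc_of_isAcc hC hD hCp hDp hp
    (ne_of_crossing hcross (Or.inl rfl)).1.symm (ne_of_crossing hcross (Or.inr rfl)).1.symm)

theorem RigidSet.mutation (hT : IsTriangulation T) {X₀ Y₀ : Arc n} (hX₀ : X₀ ∈ T)
    (hY : IsTriangulation (T \ {X₀} ∪ {Y₀})) (hrig : RigidSet T) :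
    RigidSet (T \ {X₀} ∪ {Y₀}) := by
  have hY₀ : Y₀ ∈ T \ {X₀} ∪ {Y₀} := Or.inr rfl
  have hold : ∀ A ∈ T, A ≠ X₀ → A ∈ T \ {X₀} ∪ {Y₀} := fun A hA hAX => Or.inl ⟨hA, hAX⟩
  by_cases hsame : ∃ C ∈ T, sameArc C Y₀
  · obtain ⟨C, hC, hCY⟩ := hsame
    refine hrig.of_forall_exists_sameArc ?_
    rintro A (⟨hA, -⟩ | rfl)
    exacts [⟨A, hA, sameArc_refl A⟩, ⟨C, hC, hCY⟩]
  have hcross : crossing X₀ Y₀ := by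
    by_contra hXY
    refine hsame (hT.2.2 Y₀ (hY.1 Y₀ hY₀) fun A hA => ?_)
    by_cases hAX : A = X₀
    exacts [hAX ▸ hXY, hY.2.1 A (hold A hA hAX) Y₀ hY₀]
  have hacc := hT.not_isAcc_of_crossing_only hrig hX₀ hcross
    fun A hA hAX => hY.2.1 A (hold A hA hAX) Y₀ hY₀
  have hmem : ∀ A ∈ T \ {X₀} ∪ {Y₀}, ∀ x ∈ A.ends, isAcc x → A ∈ T := by
    rintro A (⟨hA, -⟩ | rfl) x hx hxacc
    exacts [hA, (hacc x hx hxacc).elim]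
  intro A hA C hC hCA
  rcases crossing_or_exists_isAcc hCA with h | ⟨⟨x, hx, hxacc⟩, y, hy, hyacc⟩
  · exact hY.2.1 C hC A hA h
  · exact hrig A (hmem A hA y hy hyacc) C (hmem C hC x hx hxacc) hCA

end Rigid


section Leapfrog

def IsLeapfrogIndexSet (I : Set ℤ) : Prop :=
  I = Set.univ ∨ I = {i | i ≤ 0} ∨ I = {i | 0 ≤ i}

def IsLeapfrog (T : Set (Arc n)) (I : Set ℤ) (A B : ℤ → Arc n) : Prop :=
  (∀ i ∈ I, A i ∈ T ∧ B i ∈ T) ∧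
  (∀ i ∈ I, ∀ j ∈ I, i ≠ j → ¬ sameArc (A i) (A j) ∧ ¬ sameArc (B i) (B j)) ∧
  (∀ i ∈ I, ∀ j ∈ I, ¬ sameArc (A i) (B j)) ∧
  (∀ i ∈ I, ∀ j ∈ I, ¬ crossing (A i) (A j) ∧ ¬ crossing (B i) (B j) ∧
    ¬ crossing (A i) (B j)) ∧
  (∀ i ∈ I, sharesEndpoint (A i) (B i)) ∧
  (∀ i ∈ I, (i - 1) ∈ I → sharesEndpoint (A i) (B (i - 1))) ∧
  (∃ c d : Pt n, ∀ i ∈ I, crossing (A i) ⟨c, d⟩ ∧ crossing (B i) ⟨c, d⟩)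

lemma isInfiniteLeapfrog_iff {T : Set (Arc n)} :
    IsInfiniteLeapfrog T ↔ ∃ I, IsLeapfrogIndexSet I ∧ ∃ A B, IsLeapfrog T I A B :=
  Iff.rfl

lemma IsLeapfrogIndexSet.exists_add_mem_ne {I : Set ℤ} (hI : IsLeapfrogIndexSet I) (i₀ : ℤ) :
    ∃ J, IsLeapfrogIndexSet J ∧ ∃ k : ℤ, ∀ i ∈ J, i + k ∈ I ∧ i + k ≠ i₀ := by
  have hJ : IsLeapfrogIndexSet {i | 0 ≤ i} := Or.inr (Or.inr rfl)
  rcases hI with rfl | rfl | rfl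
  · exact ⟨_, hJ, i₀ + 1, fun i hi => ⟨trivial, by simp only [Set.mem_ofPred_eq] at hi; omega⟩⟩
  · refine ⟨_, Or.inr (Or.inl rfl), min i₀ 0 - 1, fun i hi => ?_⟩
    simp only [Set.mem_ofPred_eq] at hi ⊢
    omega
  · refine ⟨_, hJ, max i₀ 0 + 1, fun i hi => ?_⟩
    simp only [Set.mem_ofPred_eq] at hi ⊢
    omega

section

variable {T : Set (Arc n)} {I : Set ℤ} {A B : ℤ → Arc n}

lemma IsLeapfrog.eq_of_eq {C : Arc n} (h : IsLeapfrog T I A B) {i j : ℤ} (hi : i ∈ I)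
    (hj : j ∈ I) (hCi : A i = C ∨ B i = C) (hCj : A j = C ∨ B j = C) : i = j := by
  obtain ⟨-, hdist, hAB, -⟩ := h
  by_contra hij
  rcases hCi with hCi | hCi <;> rcases hCj with hCj | hCj
  · exact (hdist i hi j hj hij).1 (hCi ▸ hCj ▸ sameArc_refl C)
  · exact hAB i hi j hj (hCi ▸ hCj ▸ sameArc_refl C)
  · exact hAB j hj i hi (hCi ▸ hCj ▸ sameArc_refl C)
  · exact (hdist i hi j hj hij).2 (hCi ▸ hCj ▸ sameArc_refl C)

lemma IsLeapfrog.exists_forall_ne_mem {Y : Set (Arc n)} {Y₀ : Arc n} (h : IsLeapfrog Y I A B)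
    (hY : Y ⊆ insert Y₀ T) : ∃ i₀, ∀ i ∈ I, i ≠ i₀ → A i ∈ T ∧ B i ∈ T := by
  by_cases hY₀ : ∃ i₀ ∈ I, A i₀ = Y₀ ∨ B i₀ = Y₀
  · obtain ⟨i₀, hi₀, hY₀⟩ := hY₀
    refine ⟨i₀, fun i hi hne => ⟨?_, ?_⟩⟩
    · exact (hY (h.1 i hi).1).resolve_left fun hA => hne (h.eq_of_eq hi hi₀ (Or.inl hA) hY₀)
    · exact (hY (h.1 i hi).2).resolve_left fun hB => hne (h.eq_of_eq hi hi₀ (Or.inr hB) hY₀)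
  · push Not at hY₀
    exact ⟨0, fun i hi _ => ⟨(hY (h.1 i hi).1).resolve_left (hY₀ i hi).1,
      (hY (h.1 i hi).2).resolve_left (hY₀ i hi).2⟩⟩

lemma IsLeapfrog.comp_add {S : Set (Arc n)} {J : Set ℤ} {k : ℤ} (h : IsLeapfrog S I A B)
    (hk : ∀ i ∈ J, i + k ∈ I) (hT : ∀ i ∈ J, A (i + k) ∈ T ∧ B (i + k) ∈ T) :
    IsLeapfrog T J (fun i => A (i + k)) (fun i => B (i + k)) := by
  obtain ⟨-, hdist, hAB, hcross, hshare, hshare', c, d, hcd⟩ := h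
  refine ⟨hT, fun i hi j hj hij => hdist _ (hk i hi) _ (hk j hj) (by omega),
    fun i hi j hj => hAB _ (hk i hi) _ (hk j hj), fun i hi j hj => hcross _ (hk i hi) _ (hk j hj),
    fun i hi => hshare _ (hk i hi), fun i hi hi' => ?_, c, d, fun i hi => hcd _ (hk i hi)⟩
  have hshift : i - 1 + k = i + k - 1 := by ring
  have := hshare' _ (hk i hi) (hshift ▸ hk _ hi')
  rwa [← hshift] at this

end

theorem IsInfiniteLeapfrog.of_subset_insert {T Y : Set (Arc n)} {Y₀ : Arc n}
    (h : IsInfiniteLeapfrog Y) (hY : Y ⊆ insert Y₀ T) : IsInfiniteLeapfrog T := by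
  obtain ⟨I, hI, A, B, hAB⟩ := isInfiniteLeapfrog_iff.1 h
  obtain ⟨i₀, hi₀⟩ := hAB.exists_forall_ne_mem hY
  obtain ⟨J, hJ, k, hk⟩ := hI.exists_add_mem_ne i₀
  exact ⟨J, hJ, _, _, hAB.comp_add (fun i hi => (hk i hi).1)
    fun i hi => hi₀ _ (hk i hi).1 (hk i hi).2⟩

end Leapfrog

end PY

open PY

theorem stmt16 {n : ℕ} (T Y : Set (PY.Arc n)) (X₀ : PY.Arc n)
    (hT : IsTriangulation T) (hmut : IsMutation T Y X₀) :
    (IsFanTriangulation T → IsFanTriangulation Y) ∧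
    (RigidSet T → RigidSet Y) := by
  obtain ⟨hX₀, hY, Y₀, -, -, rfl⟩ := hmut
  refine ⟨fun hfan => ⟨hY, fun hleap => hfan.2 (hleap.of_subset_insert (Y₀ := Y₀) ?_)⟩,
    RigidSet.mutation hT hX₀ hY⟩
  rintro A (⟨hA, -⟩ | rfl)
  exacts [Or.inr hA, Or.inl rfl]
end
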